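/- Let h : [t₀,∞) → ℝ be r-times continuously differentiable and suppose h^{(r)}(t) + κ_{r−1}h^{(r−1)}(t) + ⋯ + κ₁h'(t) + κ₀h(t) ≥ 0 for all t ≥ t₀, where the polynomial s^r + κ_{r−1}s^{r−1} + ⋯ + κ₀ factors as ∏_{q=1}^{r}(s + c_q) with all c_q > 0. Define ψ₀ := h and ψ_q := ψ_{q−1}' + c_q ψ_{q−1} for q = 1,…,r. If ψ_q(t₀) ≥ 0 for q = 0,…,r−1, then h(t) ≥ 0 for all t ≥ t₀. -/

import Mathlib

/-!
Writing `D = d/dt`, the cascade is `ψ_q = (D + c_{q-1}) ⋯ (D + c_0) h`, so by the factorisation of the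
characteristic polynomial `ψ_r` is the left-hand side of the differential inequality and is `≥ 0` on
`[t₀, ∞)`. Going down from `q = r`: `ψ_q' + c_q ψ_q = ψ_{q+1} ≥ 0` makes `e^{c_q t} ψ_q` nondecreasing,
so `ψ_q(t₀) ≥ 0` propagates to all `t ≥ t₀`, and at `q = 0` this is `h ≥ 0`.
-/

/-- The cascade functions `ψ₀ := h`, `ψ_q := ψ_{q−1}' + c_{q} ψ_{q−1}`. -/
noncomputable def psiCascade (c : ℕ → ℝ) (h : ℝ → ℝ) : ℕ → ℝ → ℝ
  | 0 => h
  | q + 1 => fun t => deriv (psiCascade c h q) t + c q * psiCascade c h q t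

open Polynomial Set

theorem nonneg_of_deriv_add_mul_nonneg {ψ : ℝ → ℝ} {t₀ : ℝ} (c : ℝ) (hψ : Differentiable ℝ ψ)
    (h₀ : 0 ≤ ψ t₀) (hineq : ∀ t, t₀ ≤ t → 0 ≤ deriv ψ t + c * ψ t) :
    ∀ t, t₀ ≤ t → 0 ≤ ψ t := by
  set g : ℝ → ℝ := fun t => Real.exp (c * t) * ψ t
  have hg : ∀ t, HasDerivAt g (Real.exp (c * t) * (deriv ψ t + c * ψ t)) t := fun t => by
    have hexp : HasDerivAt (fun t => Real.exp (c * t)) (Real.exp (c * t) * c) t := by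
      simpa using ((hasDerivAt_id t).const_mul c).exp
    exact (hexp.mul (hψ t).hasDerivAt).congr_deriv (by ring)
  have hmono : MonotoneOn g (Ici t₀) := by
    refine monotoneOn_of_hasDerivWithinAt_nonneg (convex_Ici t₀)
      (fun t _ => (hg t).continuousAt.continuousWithinAt) (fun t _ => (hg t).hasDerivWithinAt) ?_
    rw [interior_Ici]
    exact fun t ht => mul_nonneg (Real.exp_pos _).le (hineq t (le_of_lt ht))
  intro t ht
  have hgt : 0 ≤ g t := (mul_nonneg (Real.exp_pos _).le h₀).trans (hmono self_mem_Ici ht ht)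
  exact nonneg_of_mul_nonneg_right hgt (Real.exp_pos _)

theorem natDegree_prod_X_add_C {R : Type*} [CommSemiring R] [Nontrivial R] (c : ℕ → R) (q : ℕ) :
    (∏ j ∈ Finset.range q, (X + C (c j))).natDegree = q := by
  rw [natDegree_prod_of_monic _ _ fun j _ => monic_X_add_C (c j)]
  simp

section DiffOp

variable {𝕜 : Type*} [NontriviallyNormedField 𝕜] {F : Type*} [NormedAddCommGroup F]
  [NormedSpace 𝕜 F]

/-- `diffOp h p = p(D) h = ∑ aₙ • h⁽ⁿ⁾` for `p = ∑ aₙ Xⁿ`. -/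
noncomputable def diffOp (h : 𝕜 → F) : 𝕜[X] →ₗ[𝕜] (𝕜 → F) :=
  lsum fun n => LinearMap.smulRight LinearMap.id (iteratedDeriv n h)

theorem diffOp_monomial (h : 𝕜 → F) (n : ℕ) (a : 𝕜) :
    diffOp h (monomial n a) = a • iteratedDeriv n h := by
  simp [diffOp, lsum]

theorem diffOp_mul_X (h : 𝕜 → F) (p : 𝕜[X]) : diffOp h (p * X) = diffOp (deriv h) p := by
  induction p using Polynomial.induction_on' with
  | add p q hp hq => rw [add_mul, map_add, map_add, hp, hq]
  | monomial n a => rw [monomial_mul_X, diffOp_monomial, diffOp_monomial, iteratedDeriv_succ']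

theorem diffOp_mul_C (h : 𝕜 → F) (p : 𝕜[X]) (a : 𝕜) : diffOp h (p * C a) = a • diffOp h p := by
  rw [mul_comm, ← smul_eq_C_mul, map_smul]

theorem hasDerivAt_diffOp {h : 𝕜 → F} {p : 𝕜[X]} (hh : ContDiff 𝕜 (p.natDegree + 1) h) (t : 𝕜) :
    HasDerivAt (diffOp h p) (diffOp (deriv h) p t) t := by
  have hterm : ∀ n ∈ p.support, HasDerivAt (p.coeff n • iteratedDeriv n h)
      (p.coeff n • iteratedDeriv n (deriv h) t) t := fun n hn => by
    have hdiff : Differentiable 𝕜 (iteratedDeriv n h) := hh.differentiable_iteratedDeriv n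
      (by exact_mod_cast Nat.lt_succ_of_le (le_natDegree_of_mem_supp n hn))
    rw [← iteratedDeriv_succ', iteratedDeriv_succ]
    exact ((hdiff t).hasDerivAt).const_smul (p.coeff n)
  simpa [diffOp, lsum, Polynomial.sum_def] using HasDerivAt.sum hterm

theorem diffOp_X_pow (h : 𝕜 → F) (n : ℕ) : diffOp h (X ^ n) = iteratedDeriv n h := by
  rw [X_pow_eq_monomial, diffOp_monomial, one_smul]

theorem diffOp_C_mul_X_pow (h : 𝕜 → F) (n : ℕ) (a : 𝕜) :
    diffOp h (C a * X ^ n) = a • iteratedDeriv n h := by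
  rw [C_mul_X_pow_eq_monomial, diffOp_monomial]

end DiffOp

theorem psiCascade_eq_diffOp (c : ℕ → ℝ) {h : ℝ → ℝ} {q : ℕ} (hh : ContDiff ℝ q h) :
    psiCascade c h q = diffOp h (∏ j ∈ Finset.range q, (X + C (c j))) := by
  induction q with
  | zero => rw [Finset.prod_range_zero, ← pow_zero X, diffOp_X_pow, iteratedDeriv_zero]; rfl
  | succ q ih =>
    have hP : ContDiff ℝ ((∏ j ∈ Finset.range q, (X + C (c j))).natDegree + 1) h := by
      rwa [natDegree_prod_X_add_C]
    funext t
    rw [psiCascade, ih (hh.of_le (by exact_mod_cast q.le_succ))]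
    dsimp only
    rw [(hasDerivAt_diffOp hP t).deriv, Finset.prod_range_succ, mul_add, map_add, diffOp_mul_X,
      diffOp_mul_C]
    rfl

theorem differentiable_psiCascade (c : ℕ → ℝ) {h : ℝ → ℝ} {q : ℕ} (hh : ContDiff ℝ (q + 1) h) :
    Differentiable ℝ (psiCascade c h q) := by
  rw [psiCascade_eq_diffOp c (hh.of_le (by exact_mod_cast q.le_succ))]
  exact fun t => (hasDerivAt_diffOp (by rwa [natDegree_prod_X_add_C]) t).differentiableAt

theorem ecbf_comparison_general (t₀ : ℝ) (r : ℕ) (h : ℝ → ℝ) (hsm : ContDiff ℝ (r : ℕ∞) h)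
    (κ c : ℕ → ℝ)
    (hfact : (Polynomial.X ^ r
        + ∑ q ∈ Finset.range r, Polynomial.C (κ q) * Polynomial.X ^ q : Polynomial ℝ)
      = ∏ q ∈ Finset.range r, (Polynomial.X + Polynomial.C (c q)))
    (hineq : ∀ t, t₀ ≤ t →
      0 ≤ iteratedDeriv r h t + ∑ q ∈ Finset.range r, κ q * iteratedDeriv q h t)
    (hinit : ∀ q < r, 0 ≤ psiCascade c h q t₀) :
    ∀ t, t₀ ≤ t → 0 ≤ h t := by
  have hlast : ∀ t, t₀ ≤ t → 0 ≤ psiCascade c h r t := by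
    rw [psiCascade_eq_diffOp c hsm, ← hfact]
    simpa [diffOp_X_pow, diffOp_C_mul_X_pow] using hineq
  have hstep : ∀ q < r, (∀ t, t₀ ≤ t → 0 ≤ psiCascade c h (q + 1) t) →
      ∀ t, t₀ ≤ t → 0 ≤ psiCascade c h q t := fun q hq hsucc =>
    nonneg_of_deriv_add_mul_nonneg (c q)
      (differentiable_psiCascade c (hsm.of_le (by exact_mod_cast hq))) (hinit q hq) hsucc
  exact Nat.decreasingInduction (motive := fun q _ => ∀ t, t₀ ≤ t → 0 ≤ psiCascade c h q t)
    hstep hlast (Nat.zero_le r)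

/-- eCBF comparison lemma for relative degree `r`: a linear differential inequality
whose characteristic polynomial factors as `∏ (s + c_q)` with `c_q > 0`, together
with nonnegativity of the cascade functions at `t₀`, implies `h ≥ 0` on `[t₀, ∞)`. -/
theorem ecbf_comparison (t₀ : ℝ) (r : ℕ) (h : ℝ → ℝ) (hsm : ContDiff ℝ (r : ℕ∞) h)
    (κ c : ℕ → ℝ) (hc : ∀ q < r, 0 < c q)
    (hfact : (Polynomial.X ^ r
        + ∑ q ∈ Finset.range r, Polynomial.C (κ q) * Polynomial.X ^ q : Polynomial ℝ)
      = ∏ q ∈ Finset.range r, (Polynomial.X + Polynomial.C (c q)))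
    (hineq : ∀ t, t₀ ≤ t →
      0 ≤ iteratedDeriv r h t + ∑ q ∈ Finset.range r, κ q * iteratedDeriv q h t)
    (hinit : ∀ q < r, 0 ≤ psiCascade c h q t₀) :
    ∀ t, t₀ ≤ t → 0 ≤ h t :=
  ecbf_comparison_general t₀ r h hsm κ c hfact hineq hinit
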